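/- Let S be a congruence-simple semiring with a multiplicatively absorbing element w such that x² ≠ w for every x ∈ T = S∖{w}. Then exactly one of the following five cases holds: (1) S is isomorphic to the two-element semiring 𝕋₄ or to 𝕋₈; (2) S is a finite field; (3) S is an infinite simple ring without zero-divisors; (4) w is bi-absorbing (w = o_S), S is additively idempotent (x + x = x for all x) and T·T ⊆ T; (5) w is bi-absorbing (w = o_S), S is infinite, S + S = S, x + x = o_S for every x ∈ S, T·T ⊆ T, and for every y ∈ T the powers y, y², y³, … are pairwise distinct. -/

import Mathlib

/-!
Congruence-simplicity is applied to a series of explicit congruences. The relation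
`x + w = y + w` shows that `w` is either additively neutral or additively absorbing. If `a b = w`
with `a, b ≠ w`, then (as `S` has no nonzero nilpotents) `b` kills the ideal generated by `a`, and
the congruence attached to that ideal collapses; hence `T·T ⊆ T`.

If `w` is neutral, the relation `δ` is either the identity, which makes `S` additively idempotent
and then `T = S∖{w}` is a single class, so `S ≅ 𝕋₄`; or it is full, which gives additive inverses:
`S` is a ring without zero divisors, a field (little Wedderburn) when finite and simple when
infinite. If `w` is absorbing, `2x = 2y` is either the identity, and then so is `δ`, giving
case (4); or it is full, so `2x = w`, and then `S + S` is `{w}` (giving `𝕋₈`) or all of `S`.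
In the last case `S` has no idempotent besides `w`, which forces the powers of each `y ≠ w` to be
pairwise distinct. The five cases are told apart by finiteness, additive inverses and additive
idempotency.
-/

universe u

/-- A semiring in the sense of the paper: a (nonempty) set with an associative
commutative addition and an associative multiplication distributing over
addition from both sides.  No additive or multiplicative identity is assumed. -/
class PaperSemiring (S : Type*) extends Add S, Mul S where
  add_assoc : ∀ a b c : S, a + b + c = a + (b + c)
  add_comm : ∀ a b : S, a + b = b + a
  mul_assoc : ∀ a b c : S, a * b * c = a * (b * c)
  left_distrib : ∀ a b c : S, a * (b + c) = a * b + a * c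
  right_distrib : ∀ a b c : S, (a + b) * c = a * c + b * c

/-- `nfoldAdd n x` is the `n`-fold sum `x + ⋯ + x` (only meaningful for `n ≥ 1`;
we set `nfoldAdd 0 x = x` as a junk value). -/
def nfoldAdd {S : Type*} [Add S] : ℕ → S → S
  | 0, x => x
  | 1, x => x
  | n + 2, x => nfoldAdd (n + 1) x + x

/-- `nfoldMul n x` is the `n`-fold product `x * ⋯ * x` (only meaningful for `n ≥ 1`;
we set `nfoldMul 0 x = x` as a junk value). -/
def nfoldMul {S : Type*} [Mul S] : ℕ → S → S
  | 0, x => x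
  | 1, x => x
  | n + 2, x => nfoldMul (n + 1) x * x

/-- `w` is multiplicatively absorbing. -/
def MulAbsorbing {S : Type*} [Mul S] (w : S) : Prop :=
  ∀ x : S, x * w = w ∧ w * x = w

/-- `w` is a zero element: multiplicatively absorbing and additively neutral. -/
def IsZeroElem {S : Type*} [Add S] [Mul S] (w : S) : Prop :=
  MulAbsorbing w ∧ ∀ x : S, x + w = x

/-- `w` is bi-absorbing: multiplicatively and additively absorbing. -/
def BiAbsorbing {S : Type*} [Add S] [Mul S] (w : S) : Prop :=
  MulAbsorbing w ∧ ∀ x : S, x + w = w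

/-- `I` is an ideal: nonempty, `I+I ⊆ I`, `S·I ⊆ I`, `I·S ⊆ I`. -/
def IsIdealSet {S : Type*} [Add S] [Mul S] (I : Set S) : Prop :=
  I.Nonempty ∧ (∀ a ∈ I, ∀ b ∈ I, a + b ∈ I) ∧
    ∀ s : S, ∀ a ∈ I, s * a ∈ I ∧ a * s ∈ I

/-- `I` is a bi-ideal: nonempty, `S+I ⊆ I`, `S·I ⊆ I`, `I·S ⊆ I`. -/
def IsBiIdealSet {S : Type*} [Add S] [Mul S] (I : Set S) : Prop :=
  I.Nonempty ∧ (∀ s : S, ∀ a ∈ I, s + a ∈ I) ∧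
    ∀ s : S, ∀ a ∈ I, s * a ∈ I ∧ a * s ∈ I

/-- The relation `α_I`:  `(x,y) ∈ α_I` iff `x + a = y + b` for some `a, b ∈ I`. -/
def alphaRel {S : Type*} [Add S] (I : Set S) (x y : S) : Prop :=
  ∃ a ∈ I, ∃ b ∈ I, x + a = y + b

/-- The relation `β_J = (J×J) ∪ id`. -/
def betaRel {S : Type*} (J : Set S) (x y : S) : Prop :=
  (x ∈ J ∧ y ∈ J) ∨ x = y

/-- The relation `γ_n`: `(x,y) ∈ γ_n` iff `n·x = n·y`. -/
def gammaRel {S : Type*} [Add S] (n : ℕ) (x y : S) : Prop :=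
  nfoldAdd n x = nfoldAdd n y

/-- The relation `δ`: `(x,y) ∈ δ` iff `2^i·x = y + u` and `2^i·y = x + v` for
some `i ≥ 0` and `u, v ∈ S`. -/
def deltaRel {S : Type*} [Add S] (x y : S) : Prop :=
  ∃ (i : ℕ) (u v : S), nfoldAdd (2 ^ i) x = y + u ∧ nfoldAdd (2 ^ i) y = x + v

/-- A congruence: an equivalence relation compatible with both operations. -/
def IsCongruence {S : Type*} [Add S] [Mul S] (r : S → S → Prop) : Prop :=
  Equivalence r ∧ (∀ x x' y y' : S, r x x' → r y y' → r (x + y) (x' + y')) ∧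
    ∀ x x' y y' : S, r x x' → r y y' → r (x * y) (x' * y')

/-- `S` is congruence-simple: it has just two congruences (the identity relation
and the full relation, which are distinct). -/
def CongSimple (S : Type*) [Add S] [Mul S] : Prop :=
  (∃ x y : S, x ≠ y) ∧
    ∀ r : S → S → Prop, IsCongruence r → (∀ x y, r x y ↔ x = y) ∨ ∀ x y, r x y

/-- The two-element semiring `𝕋₄`. -/
inductive T4 : Type where | a | b

instance : Add T4 := ⟨fun x y => match x, y with | .a, .a => .a | _, _ => .b⟩
instance : Mul T4 := ⟨fun x y => match x, y with | .b, .b => .b | _, _ => .a⟩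

/-- The two-element semiring `𝕋₈`. -/
inductive T8 : Type where | a | b

instance : Add T8 := ⟨fun _ _ => .a⟩
instance : Mul T8 := ⟨fun x y => match x, y with | .b, .b => .b | _, _ => .a⟩

/-- Isomorphism of semirings (as sets with two binary operations). -/
def SIso (S T : Type*) [Add S] [Mul S] [Add T] [Mul T] : Prop :=
  ∃ f : S ≃ T, (∀ x y : S, f (x + y) = f x + f y) ∧ ∀ x y : S, f (x * y) = f x * f y

/-- Addition of the semiring `V(G)` on `Option G` (`none` plays the role of `o`):
`x + x = x` and `x + y = o` for `x ≠ y`. -/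
noncomputable def vAdd {G : Type*} (x y : Option G) : Option G :=
  haveI := Classical.decEq (Option G)
  if x = y then x else none

/-- Multiplication of the semiring `V(G)` on `Option G`: it extends the one of `G`,
and `o` is multiplicatively absorbing. -/
def vMul {G : Type*} [Mul G] : Option G → Option G → Option G
  | some x, some y => some (x * y)
  | _, _ => none

/-- Case (1): `S` is isomorphic to `𝕋₄` or to `𝕋₈`. -/
def CaseTwoElem (S : Type*) [Add S] [Mul S] : Prop :=
  SIso S T4 ∨ SIso S T8

/-- `S` (with its semiring operations) is a field: there are a neutral element
`z` for addition and a neutral element `e ≠ z` for multiplication, additive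
inverses exist, multiplication is commutative and every element `≠ z` has a
multiplicative inverse. -/
def FieldOps (S : Type*) [Add S] [Mul S] : Prop :=
  ∃ z e : S, z ≠ e ∧ (∀ x : S, x + z = x) ∧ (∀ x : S, ∃ y : S, x + y = z) ∧
    (∀ x : S, x * e = x ∧ e * x = x) ∧ (∀ x y : S, x * y = y * x) ∧
    ∀ x : S, x ≠ z → ∃ y : S, x * y = e

/-- `I` is a (two-sided) ideal of the ring `S` with zero `z`. -/
def RingIdealSet {S : Type*} [Add S] [Mul S] (z : S) (I : Set S) : Prop :=
  z ∈ I ∧ (∀ a ∈ I, ∀ b ∈ I, a + b ∈ I) ∧ (∀ a ∈ I, ∃ b ∈ I, a + b = z) ∧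
    ∀ s : S, ∀ a ∈ I, s * a ∈ I ∧ a * s ∈ I

/-- `S` is a simple ring without zero-divisors: `(S,+)` is an abelian group
with neutral element `z`, the only two-sided ideals are `{z}` and `S`, and
`a·b ≠ z` whenever `a ≠ z` and `b ≠ z`. -/
def SimpleRingNoZeroDiv (S : Type*) [Add S] [Mul S] : Prop :=
  ∃ z : S, (∀ x : S, x + z = x) ∧ (∀ x : S, ∃ y : S, x + y = z) ∧
    (∀ I : Set S, RingIdealSet z I → I = {z} ∨ I = Set.univ) ∧
    ∀ a b : S, a ≠ z → b ≠ z → a * b ≠ z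

/-- Case (4): `w = o_S` is bi-absorbing, `S` is additively idempotent and
`T·T ⊆ T` where `T = S∖{w}`. -/
def CaseIdem {S : Type*} [Add S] [Mul S] (w : S) : Prop :=
  BiAbsorbing w ∧ (∀ x : S, x + x = x) ∧
    ∀ a b : S, a ≠ w → b ≠ w → a * b ≠ w

/-- Case (5): `w = o_S` is bi-absorbing, `S` is infinite, `S + S = S`,
`2x = o_S` for every `x`, `T·T ⊆ T`, and for every `y ∈ T` the powers
`y, y², y³, …` are pairwise distinct. -/
def CaseInfChar2 {S : Type*} [Add S] [Mul S] (w : S) : Prop :=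
  BiAbsorbing w ∧ Infinite S ∧ (∀ c : S, ∃ x y : S, x + y = c) ∧
    (∀ x : S, x + x = w) ∧ (∀ a b : S, a ≠ w → b ≠ w → a * b ≠ w) ∧
    ∀ y : S, y ≠ w → ∀ m n : ℕ, 1 ≤ m → 1 ≤ n → m ≠ n →
      nfoldMul m y ≠ nfoldMul n y

section Instances

variable {S : Type*} [PaperSemiring S]

instance (priority := 50) PaperSemiring.toAddCommSemigroup : AddCommSemigroup S where
  add_assoc := PaperSemiring.add_assoc
  add_comm := PaperSemiring.add_comm

instance (priority := 50) PaperSemiring.toSemigroup : Semigroup S where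
  mul_assoc := PaperSemiring.mul_assoc

instance (priority := 50) PaperSemiring.toDistrib : Distrib S where
  left_distrib := PaperSemiring.left_distrib
  right_distrib := PaperSemiring.right_distrib

end Instances

lemma CongSimple.nontrivial {S : Type*} [Add S] [Mul S] (hs : CongSimple S) : Nontrivial S :=
  ⟨hs.1⟩

lemma equivalence_betaRel {S : Type*} (J : Set S) : Equivalence (betaRel J) := by
  refine ⟨fun _ => Or.inr rfl, ?_, ?_⟩
  · rintro x y (⟨hx, hy⟩ | rfl)
    exacts [Or.inl ⟨hy, hx⟩, Or.inr rfl]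
  · rintro x y z (⟨hx, hy⟩ | rfl) (⟨hy', hz⟩ | rfl)
    exacts [Or.inl ⟨hx, hz⟩, Or.inl ⟨hx, hy⟩, Or.inl ⟨hy', hz⟩, Or.inr rfl]

lemma mem_of_forall_betaRel {S : Type*} [Nontrivial S] {J : Set S} (h : ∀ x y, betaRel J x y)
    (x : S) : x ∈ J := by
  obtain ⟨y, hy⟩ := exists_ne x
  exact (h x y).elim And.left (absurd · hy.symm)

section Congruences

variable {S : Type*} [PaperSemiring S]

lemma MulAbsorbing.add_self {w : S} (hw : MulAbsorbing w) : w + w = w := by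
  calc w + w = w * w + w * w := by rw [(hw w).1]
    _ = w := by rw [← mul_add, (hw _).2]

lemma add_mul_add (p q r t : S) :
    (p + q) * (r + t) = p * r + (p * t + (q * r + q * t)) := by
  rw [add_mul, mul_add, mul_add, add_assoc]

lemma isCongruence_alphaRel {I : Set S} (hI : IsIdealSet I) : IsCongruence (alphaRel I) := by
  obtain ⟨⟨i, hi⟩, hIadd, hImul⟩ := hI
  refine ⟨⟨fun x => ⟨i, hi, i, hi, rfl⟩, ?_, ?_⟩, ?_, ?_⟩
  · rintro x y ⟨a, ha, b, hb, h⟩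
    exact ⟨b, hb, a, ha, h.symm⟩
  · rintro x y z ⟨a, ha, b, hb, h₁⟩ ⟨c, hc, d, hd, h₂⟩
    refine ⟨a + c, hIadd _ ha _ hc, d + b, hIadd _ hd _ hb, ?_⟩
    rw [← add_assoc, h₁, add_right_comm, h₂, add_assoc]
  · rintro x x' y y' ⟨a, ha, b, hb, h₁⟩ ⟨c, hc, d, hd, h₂⟩
    refine ⟨a + c, hIadd _ ha _ hc, b + d, hIadd _ hb _ hd, ?_⟩
    rw [add_add_add_comm, h₁, h₂, add_add_add_comm]
  · rintro x x' y y' ⟨a, ha, b, hb, h₁⟩ ⟨c, hc, d, hd, h₂⟩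
    refine ⟨x * c + (a * y + a * c),
      hIadd _ (hImul x c hc).1 _ (hIadd _ (hImul y a ha).2 _ (hImul c a ha).2),
      x' * d + (b * y' + b * d),
      hIadd _ (hImul x' d hd).1 _ (hIadd _ (hImul y' b hb).2 _ (hImul d b hb).2), ?_⟩
    rw [← add_mul_add, h₁, h₂, add_mul_add]

lemma betaRel_add {J : Set S} (hJ : ∀ s, ∀ a ∈ J, s + a ∈ J) (x x' y y' : S)
    (hx : betaRel J x x') (hy : betaRel J y y') : betaRel J (x + y) (x' + y') := by
  have hJ' : ∀ s, ∀ a ∈ J, a + s ∈ J := fun s a ha => add_comm s a ▸ hJ s a ha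
  rcases hx with ⟨hx, hx'⟩ | rfl <;> rcases hy with ⟨hy, hy'⟩ | rfl
  exacts [Or.inl ⟨hJ _ _ hy, hJ _ _ hy'⟩, Or.inl ⟨hJ' _ _ hx, hJ' _ _ hx'⟩,
    Or.inl ⟨hJ _ _ hy, hJ _ _ hy'⟩, Or.inr rfl]

lemma betaRel_mul {J : Set S} (hJ : ∀ s, ∀ a ∈ J, s * a ∈ J ∧ a * s ∈ J) (x x' y y' : S)
    (hx : betaRel J x x') (hy : betaRel J y y') : betaRel J (x * y) (x' * y') := by
  rcases hx with ⟨hx, hx'⟩ | rfl <;> rcases hy with ⟨hy, hy'⟩ | rfl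
  exacts [Or.inl ⟨(hJ _ _ hy).1, (hJ _ _ hy').1⟩, Or.inl ⟨(hJ _ _ hx).2, (hJ _ _ hx').2⟩,
    Or.inl ⟨(hJ _ _ hy).1, (hJ _ _ hy').1⟩, Or.inr rfl]

lemma isCongruence_betaRel {J : Set S} (hJ : IsBiIdealSet J) : IsCongruence (betaRel J) :=
  ⟨equivalence_betaRel J, betaRel_add hJ.2.1, betaRel_mul hJ.2.2⟩

lemma isCongruence_gammaRel_two : IsCongruence (gammaRel (S := S) 2) := by
  refine ⟨⟨fun _ => rfl, Eq.symm, Eq.trans⟩, ?_, ?_⟩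
  · intro x x' y y' (hx : x + x = x' + x') (hy : y + y = y' + y')
    show (x + y) + (x + y) = (x' + y') + (x' + y')
    rw [add_add_add_comm, hx, hy, add_add_add_comm]
  · intro x x' y y' (hx : x + x = x' + x') (hy : y + y = y' + y')
    show x * y + x * y = x' * y' + x' * y'
    rw [← add_mul, hx, add_mul, ← mul_add, hy, mul_add]

end Congruences

def double {S : Type*} [Add S] (x : S) : S := x + x

section Doubling

variable {S : Type*} [PaperSemiring S]

open Function

lemma nfoldAdd_succ {n : ℕ} (hn : 1 ≤ n) (x : S) : nfoldAdd (n + 1) x = nfoldAdd n x + x := by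
  obtain ⟨m, rfl⟩ := Nat.exists_eq_add_of_le' hn
  rfl

lemma nfoldAdd_add {m n : ℕ} (hm : 1 ≤ m) (hn : 1 ≤ n) (x : S) :
    nfoldAdd (m + n) x = nfoldAdd m x + nfoldAdd n x := by
  induction n, hn using Nat.le_induction with
  | base => exact nfoldAdd_succ hm x
  | succ n hn ih =>
    rw [← add_assoc, nfoldAdd_succ (by omega), ih, nfoldAdd_succ hn, add_assoc]

lemma nfoldAdd_two_pow (i : ℕ) (x : S) : nfoldAdd (2 ^ i) x = double^[i] x := by
  induction i with
  | zero => rfl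
  | succ i ih =>
    rw [pow_succ, mul_two, nfoldAdd_add Nat.one_le_two_pow Nat.one_le_two_pow,
      iterate_succ_apply', ih, double]

lemma double_iterate_add (i : ℕ) (x y : S) : double^[i] (x + y) = double^[i] x + double^[i] y :=
  Semiconj₂.iterate (fun x y => add_add_add_comm x y x y) i x y

lemma double_iterate_mul_left (i : ℕ) (x y : S) : double^[i] (x * y) = double^[i] x * y :=
  ((Semiconj.iterate_right (f := (· * y)) (fun x => add_mul x x y) i) x).symm

lemma double_iterate_mul_right (i : ℕ) (x y : S) : double^[i] (x * y) = x * double^[i] y :=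
  ((Semiconj.iterate_right (f := (x * ·)) (fun y => mul_add x y y) i) y).symm

lemma exists_double_iterate_add_eq (i : ℕ) (x c : S) : ∃ r, double^[i] x + c = x + r := by
  induction i generalizing c with
  | zero => exact ⟨c, rfl⟩
  | succ i ih =>
    obtain ⟨r, hr⟩ := ih (double^[i] x + c)
    exact ⟨r, by rw [iterate_succ_apply', double, add_assoc, hr]⟩

lemma double_iterate_trans {i j : ℕ} {x y z u v : S} (h₁ : double^[i] x = y + u)
    (h₂ : double^[j] y = z + v) : ∃ r, double^[j + i] x = z + r :=
  ⟨v + double^[j] u, by rw [iterate_add_apply, h₁, double_iterate_add, h₂, add_assoc]⟩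

lemma double_iterate_add_add {i j : ℕ} {x x' y y' u v : S} (h₁ : double^[i] x = x' + u)
    (h₂ : double^[j] y = y' + v) : ∃ r, double^[i + j] (x + y) = (x' + y') + r := by
  obtain ⟨r₁, hr₁⟩ := exists_double_iterate_add_eq i y' (double^[i] v)
  obtain ⟨r₂, hr₂⟩ := exists_double_iterate_add_eq j x' (double^[j] u + r₁)
  refine ⟨r₂, ?_⟩
  rw [double_iterate_add, add_comm i j, iterate_add_apply, h₁, add_comm j i, iterate_add_apply,
    h₂, double_iterate_add, double_iterate_add, hr₁]
  calc _ = y' + (double^[j] x' + (double^[j] u + r₁)) := by ac_rfl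
    _ = _ := by rw [hr₂]; ac_rfl

lemma double_iterate_mul_mul {i j : ℕ} {x x' y y' u v : S} (h₁ : double^[i] x = x' + u)
    (h₂ : double^[j] y = y' + v) : ∃ r, double^[i + j] (x * y) = x' * y' + r :=
  ⟨_, by rw [iterate_add_apply, double_iterate_mul_right, double_iterate_mul_left, h₁, h₂,
    add_mul_add]⟩

lemma deltaRel_iff {x y : S} :
    deltaRel x y ↔ ∃ i u v, double^[i] x = y + u ∧ double^[i] y = x + v := by
  simp only [deltaRel, nfoldAdd_two_pow]

lemma isCongruence_deltaRel : IsCongruence (deltaRel (S := S)) := by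
  refine ⟨⟨fun x => deltaRel_iff.2 ⟨1, x, x, rfl, rfl⟩, ?_, ?_⟩, ?_, ?_⟩
  · intro x y hxy
    obtain ⟨i, u, v, h₁, h₂⟩ := deltaRel_iff.1 hxy
    exact deltaRel_iff.2 ⟨i, v, u, h₂, h₁⟩
  · intro x y z hxy hyz
    obtain ⟨i, u, v, h₁, h₂⟩ := deltaRel_iff.1 hxy
    obtain ⟨j, p, q, h₃, h₄⟩ := deltaRel_iff.1 hyz
    obtain ⟨r, hr⟩ := double_iterate_trans h₁ h₃
    obtain ⟨r', hr'⟩ := double_iterate_trans h₄ h₂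
    exact deltaRel_iff.2 ⟨j + i, r, r', hr, add_comm i j ▸ hr'⟩
  · intro x x' y y' hx hy
    obtain ⟨i, u, v, h₁, h₂⟩ := deltaRel_iff.1 hx
    obtain ⟨j, p, q, h₃, h₄⟩ := deltaRel_iff.1 hy
    obtain ⟨r, hr⟩ := double_iterate_add_add h₁ h₃
    obtain ⟨r', hr'⟩ := double_iterate_add_add h₂ h₄
    exact deltaRel_iff.2 ⟨i + j, r, r', hr, hr'⟩
  · intro x x' y y' hx hy
    obtain ⟨i, u, v, h₁, h₂⟩ := deltaRel_iff.1 hx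
    obtain ⟨j, p, q, h₃, h₄⟩ := deltaRel_iff.1 hy
    obtain ⟨r, hr⟩ := double_iterate_mul_mul h₁ h₃
    obtain ⟨r', hr'⟩ := double_iterate_mul_mul h₂ h₄
    exact deltaRel_iff.2 ⟨i + j, r, r', hr, hr'⟩

lemma deltaRel_add_self (x : S) : deltaRel x (x + x) := by
  obtain ⟨r, hr⟩ := exists_double_iterate_add_eq 2 x (double^[2] x)
  exact deltaRel_iff.2 ⟨2, x + x, r, rfl, by rw [double_iterate_add, hr]⟩

end Doubling

def annihilatedBy {S : Type*} [Mul S] (w b : S) : Set S :=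
  {x | b * x = w ∧ ∀ u, b * (u * x) = w}

section NoZeroDivisors

variable {S : Type*} [PaperSemiring S] {w : S}

lemma w_mem_annihilatedBy (hw : MulAbsorbing w) (b : S) : w ∈ annihilatedBy w b :=
  ⟨(hw b).1, fun u => by rw [(hw u).1, (hw b).1]⟩

lemma mul_mem_annihilatedBy (hw : MulAbsorbing w) {b : S} :
    ∀ s, ∀ x ∈ annihilatedBy w b, s * x ∈ annihilatedBy w b ∧ x * s ∈ annihilatedBy w b := by
  rintro s x ⟨hx, hux⟩
  refine ⟨⟨hux s, fun u => by rw [← mul_assoc u]; exact hux _⟩, ?_, fun u => ?_⟩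
  · rw [← mul_assoc, hx, (hw s).2]
  · rw [← mul_assoc u, ← mul_assoc, hux, (hw s).2]

/-- `(b a)² = b (a b) a` and `(b u a)² = b u (a b) u a`. -/
lemma mem_annihilatedBy_of_mul_eq (hw : MulAbsorbing w) (hnil : ∀ x : S, x ≠ w → x * x ≠ w)
    {a b : S} (hab : a * b = w) : a ∈ annihilatedBy w b := by
  have hsq : ∀ x : S, x * x = w → x = w := fun x h => by_contra fun hx => hnil x hx h
  refine ⟨hsq _ ?_, fun u => hsq _ ?_⟩
  · rw [mul_assoc, ← mul_assoc a, hab, (hw a).2, (hw b).1]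
  · rw [mul_assoc, ← mul_assoc (u * a), mul_assoc u, hab, (hw u).1, (hw _).2, (hw b).1]

lemma isIdealSet_annihilatedBy (hw : MulAbsorbing w) (b : S) : IsIdealSet (annihilatedBy w b) :=
  ⟨⟨w, w_mem_annihilatedBy hw b⟩,
    fun x ⟨hx, hux⟩ y ⟨hy, huy⟩ => ⟨by rw [mul_add, hx, hy, hw.add_self],
      fun u => by rw [mul_add, mul_add, hux, huy, hw.add_self]⟩,
    mul_mem_annihilatedBy hw⟩

lemma isBiIdealSet_annihilatedBy (hw : MulAbsorbing w) (ha : ∀ x : S, x + w = w) (b : S) :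
    IsBiIdealSet (annihilatedBy w b) :=
  ⟨⟨w, w_mem_annihilatedBy hw b⟩,
    fun s x ⟨hx, hux⟩ => ⟨by rw [mul_add, hx, ha], fun u => by rw [mul_add, mul_add, hux, ha]⟩,
    mul_mem_annihilatedBy hw⟩

lemma mem_annihilatedBy_of_add_eq (hw : MulAbsorbing w) (hz : ∀ x : S, x + w = x) {b x y : S}
    (hx : x ∈ annihilatedBy w b) (hxy : x + y = w) : y ∈ annihilatedBy w b := by
  have hcancel : ∀ p q : S, p = w → p + q = w → q = w := by
    rintro p q rfl h
    rwa [add_comm, hz] at h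
  exact ⟨hcancel _ _ hx.1 (by rw [← mul_add, hxy, (hw b).1]),
    fun u => hcancel _ _ (hx.2 u) (by rw [← mul_add, ← mul_add, hxy, (hw u).1, (hw b).1])⟩

lemma mul_ne_of_add_absorbing (hs : CongSimple S) (hw : MulAbsorbing w)
    (hnil : ∀ x : S, x ≠ w → x * x ≠ w) (ha : ∀ x : S, x + w = w) :
    ∀ a b : S, a ≠ w → b ≠ w → a * b ≠ w := by
  intro a b ha' hb hab
  have haJ := mem_annihilatedBy_of_mul_eq hw hnil hab
  rcases hs.2 _ (isCongruence_betaRel (isBiIdealSet_annihilatedBy hw ha b)) with hid | hfull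
  · exact ha' ((hid a w).1 (Or.inl ⟨haJ, w_mem_annihilatedBy hw b⟩))
  · have := hs.nontrivial
    exact hnil b hb (mem_of_forall_betaRel hfull b).1

lemma mul_ne_of_add_neutral (hs : CongSimple S) (hw : MulAbsorbing w)
    (hnil : ∀ x : S, x ≠ w → x * x ≠ w) (hz : ∀ x : S, x + w = x)
    (hside : (∀ x : S, x + x = x) ∨ ∀ x : S, ∃ y, x + y = w) :
    ∀ a b : S, a ≠ w → b ≠ w → a * b ≠ w := by
  intro a b ha' hb hab
  set J := annihilatedBy w b
  have haJ : a ∈ J := mem_annihilatedBy_of_mul_eq hw hnil hab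
  have hwJ : w ∈ J := w_mem_annihilatedBy hw b
  rcases hs.2 _ (isCongruence_alphaRel (isIdealSet_annihilatedBy hw b)) with hid | hfull
  · refine ha' ((hid a w).1 ?_)
    rcases hside with hidem | hneg
    · exact ⟨a, haJ, a, haJ, by rw [hidem, add_comm, hz]⟩
    · obtain ⟨y, hy⟩ := hneg a
      exact ⟨y, mem_annihilatedBy_of_add_eq hw hz haJ hy, w, hwJ, by rw [hy, hz]⟩
  · obtain ⟨c, hc, d, hd, hbcd⟩ := hfull b w
    refine hnil b hb ?_
    calc b * b = b * (b + c) := by rw [mul_add, hc.1, hz]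
      _ = w := by rw [hbcd, mul_add, (hw b).1, hd.1, hz]

end NoZeroDivisors

section TwoElements

open Function

lemma eq_or_eq_of_isCongruence_betaRel_ne {S : Type*} [Add S] [Mul S] (hs : CongSimple S)
    {w t : S} (hcong : IsCongruence (betaRel {x : S | x ≠ w})) (ht : t ≠ w) (x : S) :
    x = w ∨ x = t := by
  rcases hs.2 _ hcong with hid | hfull
  · exact or_iff_not_imp_left.2 fun hx => (hid x t).1 (Or.inl ⟨hx, ht⟩)
  · exact absurd ((hfull w t).resolve_left fun h => h.1 rfl) ht.symm

lemma bijective_ite_eq {S T : Type*} [DecidableEq S] {w t : S} {a b : T}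
    (hS : ∀ x, x = w ∨ x = t) (ht : t ≠ w) (hT : ∀ y, y = a ∨ y = b) (hab : a ≠ b) :
    Bijective fun x => if x = w then a else b := by
  refine ⟨fun x y hxy => ?_, fun y => ?_⟩
  · rcases hS x with rfl | rfl <;> rcases hS y with rfl | rfl <;> simp_all [Ne.symm hab]
  · rcases hT y with rfl | rfl
    exacts [⟨w, if_pos rfl⟩, ⟨t, if_neg ht⟩]

variable {S : Type*} [PaperSemiring S] {w : S}

lemma mul_eq_iff_of_mul_ne (hw : MulAbsorbing w) (hTT : ∀ a b : S, a ≠ w → b ≠ w → a * b ≠ w)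
    (x y : S) : x * y = w ↔ x = w ∨ y = w := by
  refine ⟨fun h => ?_, ?_⟩
  · by_contra! hxy
    exact hTT x y hxy.1 hxy.2 h
  · rintro (rfl | rfl)
    exacts [(hw y).2, (hw x).1]

lemma betaRel_ne_mul (hw : MulAbsorbing w) (hTT : ∀ a b : S, a ≠ w → b ≠ w → a * b ≠ w)
    (x x' y y' : S) (hx : betaRel {x : S | x ≠ w} x x') (hy : betaRel {x : S | x ≠ w} y y') :
    betaRel {x : S | x ≠ w} (x * y) (x' * y') := by
  rcases hx with ⟨hx, hx'⟩ | rfl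
  · rcases eq_or_ne y w with rfl | hyw
    · rcases hy with ⟨hy, -⟩ | rfl
      exacts [absurd rfl hy, Or.inr (by rw [(hw x).1, (hw x').1])]
    · have hy' : y' ≠ w := by rcases hy with ⟨-, h⟩ | rfl; exacts [h, hyw]
      exact Or.inl ⟨hTT x y hx hyw, hTT x' y' hx' hy'⟩
  · rcases hy with ⟨hy, hy'⟩ | rfl
    · rcases eq_or_ne x w with rfl | hxw
      · exact Or.inr (by rw [(hw y).2, (hw y').2])
      · exact Or.inl ⟨hTT x y hxw hy, hTT x y' hxw hy'⟩
    · exact Or.inr rfl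

lemma sIso_T4 {t : S} (hS : ∀ x, x = w ∨ x = t) (ht : t ≠ w)
    (hadd : ∀ x y, x + y = w ↔ x = w ∧ y = w) (hmul : ∀ x y, x * y = w ↔ x = w ∨ y = w) :
    SIso S T4 := by
  classical
  have hf := bijective_ite_eq hS ht (a := T4.a) (b := T4.b) (by rintro (_ | _) <;> simp)
    T4.noConfusion
  refine ⟨Equiv.ofBijective _ hf, fun x y => ?_, fun x y => ?_⟩ <;>
    by_cases hx : x = w <;> by_cases hy : y = w <;> simp [hx, hy, hadd, hmul] <;> rfl

lemma sIso_T8 {t : S} (hS : ∀ x, x = w ∨ x = t) (ht : t ≠ w)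
    (hadd : ∀ x y : S, x + y = w) (hmul : ∀ x y, x * y = w ↔ x = w ∨ y = w) :
    SIso S T8 := by
  classical
  have hf := bijective_ite_eq hS ht (a := T8.a) (b := T8.b) (by rintro (_ | _) <;> simp)
    T8.noConfusion
  refine ⟨Equiv.ofBijective _ hf, fun x y => ?_, fun x y => ?_⟩ <;>
    by_cases hx : x = w <;> by_cases hy : y = w <;> simp [hx, hy, hadd, hmul] <;> rfl

end TwoElements

section Rings

variable {S : Type*} [PaperSemiring S] {w : S}

noncomputable abbrev addCommGroupOfAddInv (hz : ∀ x : S, x + w = x)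
    (hinv : ∀ x : S, ∃ y, x + y = w) : AddCommGroup S :=
  letI : Zero S := ⟨w⟩
  letI : Neg S := ⟨fun x => (hinv x).choose⟩
  { zero_add x := (add_comm w x).trans (hz x)
    add_zero := hz
    neg_add_cancel x := (add_comm _ x).trans (hinv x).choose_spec
    add_comm := add_comm
    nsmul := nsmulRec
    zsmul := zsmulRec }

noncomputable abbrev nonUnitalRingOfAddInv (hw : MulAbsorbing w) (hz : ∀ x : S, x + w = x)
    (hinv : ∀ x : S, ∃ y, x + y = w) : NonUnitalRing S where
  __ := addCommGroupOfAddInv hz hinv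
  left_distrib := mul_add
  right_distrib := add_mul
  zero_mul x := (hw x).2
  mul_zero x := (hw x).1
  mul_assoc := mul_assoc

noncomputable abbrev ringOfAddInv (hw : MulAbsorbing w) (hz : ∀ x : S, x + w = x)
    (hinv : ∀ x : S, ∃ y, x + y = w) {e : S} (he : ∀ x, e * x = x ∧ x * e = x) : Ring S where
  __ := nonUnitalRingOfAddInv hw hz hinv
  one := e
  one_mul x := (he x).1
  mul_one x := (he x).2

lemma exists_mul_identity [Finite S] [Nontrivial S] (hw : MulAbsorbing w)
    (hz : ∀ x : S, x + w = x) (hinv : ∀ x : S, ∃ y, x + y = w)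
    (hTT : ∀ a b : S, a ≠ w → b ≠ w → a * b ≠ w) : ∃ e : S, ∀ x, e * x = x ∧ x * e = x := by
  let := nonUnitalRingOfAddInv hw hz hinv
  have : NoZeroDivisors S := ⟨fun h => (mul_eq_iff_of_mul_ne hw hTT _ _).1 h⟩
  obtain ⟨t, ht⟩ := exists_ne (0 : S)
  obtain ⟨e, he : t * e = t⟩ := Finite.injective_iff_surjective.1 (mul_right_injective₀ ht) t
  obtain ⟨e', he' : e' * t = t⟩ := Finite.injective_iff_surjective.1 (mul_left_injective₀ ht) t
  have hleft : ∀ x, e * x = x := fun x => mul_left_cancel₀ ht (by rw [← mul_assoc, he])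
  have hright : ∀ x, x * e' = x := fun x => mul_right_cancel₀ ht (by rw [mul_assoc, he'])
  have hee' : e = e' := (hright e).symm.trans (hleft e')
  exact ⟨e, fun x => ⟨hleft x, hee' ▸ hright x⟩⟩

/-- Little Wedderburn supplies the commutativity. -/
lemma fieldOps_of_finite [Finite S] [Nontrivial S] (hw : MulAbsorbing w)
    (hz : ∀ x : S, x + w = x) (hinv : ∀ x : S, ∃ y, x + y = w)
    (hTT : ∀ a b : S, a ≠ w → b ≠ w → a * b ≠ w) : FieldOps S := by
  obtain ⟨e, he⟩ := exists_mul_identity hw hz hinv hTT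
  let := ringOfAddInv hw hz hinv he
  have : NoZeroDivisors S := ⟨fun h => (mul_eq_iff_of_mul_ne hw hTT _ _).1 h⟩
  have := NoZeroDivisors.to_isDomain S
  have hF := Finite.isDomain_to_isField S
  exact ⟨w, e, zero_ne_one (α := S), hz, hinv, fun x => (he x).symm, hF.mul_comm,
    fun x hx => hF.mul_inv_cancel hx⟩

lemma simpleRingNoZeroDiv_of_add_neg (hs : CongSimple S) (hz : ∀ x : S, x + w = x)
    (hinv : ∀ x : S, ∃ y, x + y = w) (hTT : ∀ a b : S, a ≠ w → b ≠ w → a * b ≠ w) :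
    SimpleRingNoZeroDiv S := by
  refine ⟨w, hz, hinv, fun I ⟨hwI, hadd, hneg, hmul⟩ => ?_, hTT⟩
  rcases hs.2 _ (isCongruence_alphaRel ⟨⟨w, hwI⟩, hadd, hmul⟩) with hid | hfull
  · refine Or.inl (Set.eq_singleton_iff_unique_mem.2 ⟨hwI, fun x hx => ?_⟩)
    obtain ⟨u, hu, hxu⟩ := hneg x hx
    exact (hid x w).1 ⟨u, hu, w, hwI, by rw [hxu, hz]⟩
  · refine Or.inr (Set.eq_univ_of_forall fun x => ?_)
    obtain ⟨u, hu, v, hv, hxuv⟩ := hfull x w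
    obtain ⟨u', hu', huu'⟩ := hneg u hu
    have hx : x = v + u' := by rw [← hz x, ← huu', ← add_assoc, hxuv, add_comm w, hz]
    exact hx ▸ hadd v hv u' hu'

end Rings

lemma isIdempotentElem_pow_mul_of_pow_add_eq {M : Type*} [Monoid M] {x : M} {m d : ℕ}
    (hd : 0 < d) (h : x ^ (m + d) = x ^ m) : IsIdempotentElem (x ^ (m * d)) := by
  have hper : Function.IsPeriodicPt (· * x) d (x ^ m) := by
    simp only [Function.IsPeriodicPt, Function.IsFixedPt, mul_right_iterate, ← pow_add, h]
  have hmd : m ≤ m * d := Nat.le_mul_of_pos_right m hd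
  have := ((hper.apply_iterate (m * d - m)).mul_const m).eq
  simp only [mul_right_iterate, ← pow_add, Nat.add_sub_cancel' hmd, mul_comm d m] at this
  exact (pow_add x _ _).symm.trans this

section Powers

variable {S : Type*} [PaperSemiring S] {w : S}

lemma coe_nfoldMul {n : ℕ} (hn : 1 ≤ n) (y : S) :
    ((nfoldMul n y : S) : WithOne S) = (y : WithOne S) ^ n := by
  induction n, hn using Nat.le_induction with
  | base => exact (pow_one _).symm
  | succ n hn ih =>
    obtain ⟨k, rfl⟩ := Nat.exists_eq_add_of_le' hn
    rw [pow_succ, ← ih]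
    rfl

lemma nfoldMul_ne_of_ne (hTT : ∀ a b : S, a ≠ w → b ≠ w → a * b ≠ w) {y : S} (hy : y ≠ w)
    {n : ℕ} (hn : 1 ≤ n) : nfoldMul n y ≠ w := by
  induction n, hn using Nat.le_induction with
  | base => exact hy
  | succ n hn ih =>
    obtain ⟨k, rfl⟩ := Nat.exists_eq_add_of_le' hn
    exact hTT _ y ih hy

lemma nfoldMul_ne_nfoldMul_of_lt (hTT : ∀ a b : S, a ≠ w → b ≠ w → a * b ≠ w)
    (hidem : ∀ e : S, e ≠ w → e * e ≠ e) {y : S} (hy : y ≠ w) {m n : ℕ} (hm : 1 ≤ m)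
    (hmn : m < n) : nfoldMul m y ≠ nfoldMul n y := by
  intro h
  have hN : 1 ≤ m * (n - m) := Nat.mul_pos hm (Nat.sub_pos_of_lt hmn)
  have hcoe := isIdempotentElem_pow_mul_of_pow_add_eq (x := (y : WithOne S)) (Nat.sub_pos_of_lt hmn)
    (by rw [Nat.add_sub_cancel' hmn.le, ← coe_nfoldMul hm, ← coe_nfoldMul (hm.trans hmn.le), h])
  rw [IsIdempotentElem, ← coe_nfoldMul hN, ← WithOne.coe_mul, WithOne.coe_inj] at hcoe
  exact hidem _ (nfoldMul_ne_of_ne hTT hy hN) hcoe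

/-- Writing `e = u + v`, the elements `a = e u e` and `b = e v e` satisfy `e = a + b`, `a e = a`
and `e b = b`, so `e = a (a + b) + (a + b) b = a a + (a b + a b) + b b`, which absorbs
`a b + a b = w`. -/
lemma mul_self_ne_self_of_add_self_eq (ha : ∀ x : S, x + w = w) (hchar2 : ∀ x : S, x + x = w)
    (hsums : ∀ c : S, ∃ x y : S, x + y = c) {e : S} (he : e ≠ w) : e * e ≠ e := by
  intro hee
  obtain ⟨u, v, huv⟩ := hsums e
  set a := e * u * e
  set b := e * v * e
  have hab : a + b = e := by rw [← add_mul, ← mul_add, huv, hee, hee]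
  have hae : a * e = a := by rw [mul_assoc, hee]
  have heb : e * b = b := by rw [← mul_assoc, ← mul_assoc, hee]
  refine he ?_
  calc e = a * (a + b) + (a + b) * b := by rw [hab, hae, heb, hab]
    _ = a * a + (a * b + a * b + b * b) := by rw [mul_add, add_mul, add_assoc, add_assoc]
    _ = w := by rw [hchar2, add_comm w, ha, ha]

end Powers

section Classification

variable {S : Type*} [PaperSemiring S] {w : S}

open Function

lemma add_eq_self_or_add_eq_of_congSimple (hs : CongSimple S) (hw : MulAbsorbing w) :
    (∀ x : S, x + w = x) ∨ ∀ x : S, x + w = w := by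
  have hI : IsIdealSet ({w} : Set S) :=
    ⟨⟨w, rfl⟩, by rintro _ rfl _ rfl; exact hw.add_self,
      by rintro s _ rfl; exact ⟨(hw s).1, (hw s).2⟩⟩
  rcases hs.2 _ (isCongruence_alphaRel hI) with hid | hfull
  · exact Or.inl fun x => (hid (x + w) x).1 ⟨w, rfl, w, rfl, by rw [add_assoc, hw.add_self]⟩
  · refine Or.inr fun x => ?_
    obtain ⟨_, rfl, _, rfl, h⟩ := hfull x w
    rw [h, hw.add_self]

lemma sIso_T4_of_add_self (hs : CongSimple S) (hw : MulAbsorbing w)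
    (hnil : ∀ x : S, x ≠ w → x * x ≠ w) (hz : ∀ x : S, x + w = x) (hidem : ∀ x : S, x + x = x) :
    SIso S T4 := by
  have hTT := mul_ne_of_add_neutral hs hw hnil hz (Or.inl hidem)
  have hadd : ∀ x y : S, x + y = w ↔ x = w ∧ y = w := by
    have h : ∀ x y : S, x + y = w → x = w := fun x y hxy => by
      rw [← hz x, ← hxy, ← add_assoc, hidem, hxy]
    refine fun x y => ⟨fun hxy => ⟨h x y hxy, h y x (add_comm x y ▸ hxy)⟩, ?_⟩
    rintro ⟨rfl, rfl⟩
    exact hw.add_self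
  have := hs.nontrivial
  obtain ⟨t, ht⟩ := exists_ne w
  have hcong : IsCongruence (betaRel {x : S | x ≠ w}) :=
    ⟨equivalence_betaRel _, betaRel_add fun s a ha h => ha ((hadd s a).1 h).2,
      betaRel_ne_mul hw hTT⟩
  exact sIso_T4 (eq_or_eq_of_isCongruence_betaRel_ne hs hcong ht) ht hadd
    (mul_eq_iff_of_mul_ne hw hTT)

lemma classification_of_add_neutral (hs : CongSimple S) (hw : MulAbsorbing w)
    (hnil : ∀ x : S, x ≠ w → x * x ≠ w) (hz : ∀ x : S, x + w = x) :
    CaseTwoElem S ∨ (Finite S ∧ FieldOps S) ∨ (Infinite S ∧ SimpleRingNoZeroDiv S) := by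
  rcases hs.2 _ isCongruence_deltaRel with hid | hfull
  · exact Or.inl (Or.inl (sIso_T4_of_add_self hs hw hnil hz fun x =>
      ((hid x (x + x)).1 (deltaRel_add_self x)).symm))
  have hinv : ∀ x : S, ∃ y, x + y = w := fun x => by
    obtain ⟨i, -, v, -, h⟩ := deltaRel_iff.1 (hfull x w)
    exact ⟨v, (iterate_fixed (f := double) hw.add_self i).symm.trans h |>.symm⟩
  have hTT := mul_ne_of_add_neutral hs hw hnil hz (Or.inr hinv)
  have := hs.nontrivial
  rcases finite_or_infinite S with hfin | hinf
  · exact Or.inr (Or.inl ⟨hfin, fieldOps_of_finite hw hz hinv hTT⟩)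
  · exact Or.inr (Or.inr ⟨hinf, simpleRingNoZeroDiv_of_add_neg hs hz hinv hTT⟩)

/-- `δ` cannot be full: it would give `2^i t = w = 2^i w` for some `t ≠ w`. -/
lemma add_self_of_injective_double (hs : CongSimple S) (ha : ∀ x : S, x + w = w)
    (hinj : Injective (double (S := S))) (x : S) : x + x = x := by
  rcases hs.2 _ isCongruence_deltaRel with hid | hfull
  · exact ((hid x (x + x)).1 (deltaRel_add_self x)).symm
  · have := hs.nontrivial
    obtain ⟨t, ht⟩ := exists_ne w
    obtain ⟨i, u, -, h, -⟩ := deltaRel_iff.1 (hfull t w)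
    refine absurd (hinj.iterate i ?_) ht
    rw [h, add_comm, ha, iterate_fixed (f := double) (ha w) i]

lemma isBiIdealSet_sums [Nonempty S] : IsBiIdealSet {c : S | ∃ x y : S, x + y = c} := by
  obtain ⟨x⟩ := ‹Nonempty S›
  refine ⟨⟨x + x, x, x, rfl⟩, ?_, ?_⟩
  · rintro s _ ⟨x, y, rfl⟩
    exact ⟨s + x, y, add_assoc s x y⟩
  · rintro s _ ⟨x, y, rfl⟩
    exact ⟨⟨s * x, s * y, (mul_add ..).symm⟩, ⟨x * s, y * s, (add_mul ..).symm⟩⟩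

lemma sIso_T8_of_add_eq (hs : CongSimple S) (hw : MulAbsorbing w)
    (hTT : ∀ a b : S, a ≠ w → b ≠ w → a * b ≠ w) (hadd : ∀ x y : S, x + y = w) :
    SIso S T8 := by
  have := hs.nontrivial
  obtain ⟨t, ht⟩ := exists_ne w
  have hcong : IsCongruence (betaRel {x : S | x ≠ w}) :=
    ⟨equivalence_betaRel _, fun x x' y y' _ _ => Or.inr (by rw [hadd, hadd]),
      betaRel_ne_mul hw hTT⟩
  exact sIso_T8 (eq_or_eq_of_isCongruence_betaRel_ne hs hcong ht) ht hadd
    (mul_eq_iff_of_mul_ne hw hTT)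

lemma caseInfChar2_of_add_self_eq [Nontrivial S] (hw : MulAbsorbing w) (ha : ∀ x : S, x + w = w)
    (hTT : ∀ a b : S, a ≠ w → b ≠ w → a * b ≠ w) (hchar2 : ∀ x : S, x + x = w)
    (hsums : ∀ c : S, ∃ x y : S, x + y = c) : CaseInfChar2 w := by
  have hidem := fun e => mul_self_ne_self_of_add_self_eq ha hchar2 hsums (e := e)
  have hdistinct : ∀ y : S, y ≠ w → ∀ m n : ℕ, 1 ≤ m → 1 ≤ n → m ≠ n →
      nfoldMul m y ≠ nfoldMul n y := by
    intro y hy m n hm hn hmn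
    rcases hmn.lt_or_gt with h | h
    exacts [nfoldMul_ne_nfoldMul_of_lt hTT hidem hy hm h,
      (nfoldMul_ne_nfoldMul_of_lt hTT hidem hy hn h).symm]
  obtain ⟨t, ht⟩ := exists_ne w
  have hinf : Infinite S := Infinite.of_injective (fun n : ℕ => nfoldMul (n + 1) t)
    fun m n h => by by_contra hmn; exact hdistinct t ht _ _ (by omega) (by omega) (by omega) h
  exact ⟨⟨hw, ha⟩, hinf, hsums, hchar2, hTT, hdistinct⟩

lemma classification_of_add_absorbing (hs : CongSimple S) (hw : MulAbsorbing w)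
    (hnil : ∀ x : S, x ≠ w → x * x ≠ w) (ha : ∀ x : S, x + w = w) :
    CaseTwoElem S ∨ CaseIdem w ∨ CaseInfChar2 w := by
  have hTT := mul_ne_of_add_absorbing hs hw hnil ha
  have := hs.nontrivial
  rcases hs.2 _ isCongruence_gammaRel_two with hγ | hγ
  · exact Or.inr (Or.inl ⟨⟨hw, ha⟩,
      add_self_of_injective_double hs ha fun x y h => (hγ x y).1 h, hTT⟩)
  have hchar2 : ∀ x : S, x + x = w := fun x => (hγ x w).trans hw.add_self
  rcases hs.2 _ (isCongruence_betaRel isBiIdealSet_sums) with hid | hfull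
  · refine Or.inl (Or.inr (sIso_T8_of_add_eq hs hw hTT fun x y => ?_))
    exact (hid (x + y) w).1 (Or.inl ⟨⟨x, y, rfl⟩, ⟨w, w, hw.add_self⟩⟩)
  · exact Or.inr (Or.inr
      (caseInfChar2_of_add_self_eq hw ha hTT hchar2 (mem_of_forall_betaRel hfull)))

end Classification

instance : Finite T4 :=
  Finite.of_surjective (fun b : Bool => if b then T4.b else T4.a)
    (fun x => by cases x; exacts [⟨false, rfl⟩, ⟨true, rfl⟩])

instance : Finite T8 :=
  Finite.of_surjective (fun b : Bool => if b then T8.b else T8.a)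
    (fun x => by cases x; exacts [⟨false, rfl⟩, ⟨true, rfl⟩])

section Exclusions

variable {S : Type*}

section Iso

variable [Add S] [Mul S]

lemma SIso.finite {T : Type*} [Add T] [Mul T] [Finite T] (h : SIso S T) : Finite S :=
  let ⟨f, _⟩ := h
  Finite.of_equiv T f.symm

lemma SIso.add_self_of_T4 (h : SIso S T4) (x : S) : x + x = x := by
  obtain ⟨f, hadd, -⟩ := h
  exact f.injective (by rw [hadd]; cases f x <;> rfl)

lemma SIso.not_biAbsorbing_of_T4 (h : SIso S T4) (w : S) : ¬BiAbsorbing w := by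
  obtain ⟨f, hadd, hmul⟩ := h
  rintro ⟨hw, ha⟩
  cases hfw : f w
  · have := hadd (f.symm .b) w
    rw [ha, f.apply_symm_apply, hfw] at this
    exact T4.noConfusion this
  · have := hmul (f.symm .a) w
    rw [(hw _).1, f.apply_symm_apply, hfw] at this
    exact T4.noConfusion this

lemma SIso.add_eq_of_T8 (h : SIso S T8) (x y x' y' : S) : x + y = x' + y' := by
  obtain ⟨f, hadd, -⟩ := h
  exact f.injective (by rw [hadd, hadd]; rfl)

lemma SIso.not_add_self_of_T8 (h : SIso S T8) : ¬∀ x : S, x + x = x := by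
  obtain ⟨f, hadd, -⟩ := h
  intro hidem
  have := hadd (f.symm .b) (f.symm .b)
  rw [hidem, f.apply_symm_apply] at this
  exact T8.noConfusion this

lemma CaseTwoElem.finite (h : CaseTwoElem S) : Finite S :=
  h.elim SIso.finite SIso.finite

end Iso

variable [PaperSemiring S]

lemma eq_of_add_absorbing_of_add_neg {w z : S} (ha : ∀ x : S, x + w = w)
    (hz : ∀ x : S, x + z = x) (hinv : ∀ x : S, ∃ y, x + y = z) (x : S) : x = z := by
  obtain ⟨y, hy⟩ := hinv w
  rw [← hz x, ← hy, ← add_assoc, ha]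

lemma eq_of_add_self_of_add_neg {z : S} (hidem : ∀ x : S, x + x = x)
    (hz : ∀ x : S, x + z = x) (hinv : ∀ x : S, ∃ y, x + y = z) (x : S) : x = z := by
  obtain ⟨y, hy⟩ := hinv x
  rw [← hz x, ← hy, ← add_assoc, hidem]

lemma CaseTwoElem.not_fieldOps (h : CaseTwoElem S) : ¬FieldOps S := by
  rintro ⟨z, e, hze, hz, hinv, -⟩
  rcases h with h | h
  · exact hze (eq_of_add_self_of_add_neg h.add_self_of_T4 hz hinv e).symm
  · exact hze (by rw [← hz z, ← hz e, h.add_eq_of_T8 z z e z])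

lemma CaseTwoElem.not_caseIdem (h : CaseTwoElem S) (w : S) : ¬CaseIdem w := by
  rintro ⟨hb, hidem, -⟩
  exact h.elim (fun h => h.not_biAbsorbing_of_T4 w hb) fun h => h.not_add_self_of_T8 hidem

end Exclusions

lemma exactly_one_of_five {p₁ p₂ p₃ p₄ p₅ : Prop} (h : p₁ ∨ p₂ ∨ p₃ ∨ p₄ ∨ p₅)
    (h₁₂ : ¬(p₁ ∧ p₂)) (h₁₃ : ¬(p₁ ∧ p₃)) (h₁₄ : ¬(p₁ ∧ p₄)) (h₁₅ : ¬(p₁ ∧ p₅))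
    (h₂₃ : ¬(p₂ ∧ p₃)) (h₂₄ : ¬(p₂ ∧ p₄)) (h₂₅ : ¬(p₂ ∧ p₅)) (h₃₄ : ¬(p₃ ∧ p₄))
    (h₃₅ : ¬(p₃ ∧ p₅)) (h₄₅ : ¬(p₄ ∧ p₅)) :
    (p₁ ∧ ¬p₂ ∧ ¬p₃ ∧ ¬p₄ ∧ ¬p₅) ∨ (¬p₁ ∧ p₂ ∧ ¬p₃ ∧ ¬p₄ ∧ ¬p₅) ∨
      (¬p₁ ∧ ¬p₂ ∧ p₃ ∧ ¬p₄ ∧ ¬p₅) ∨ (¬p₁ ∧ ¬p₂ ∧ ¬p₃ ∧ p₄ ∧ ¬p₅) ∨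
      (¬p₁ ∧ ¬p₂ ∧ ¬p₃ ∧ ¬p₄ ∧ p₅) := by
  rcases h with h | h | h | h | h <;> simp_all

lemma classification {S : Type*} [PaperSemiring S] (hs : CongSimple S) {w : S}
    (hw : MulAbsorbing w) (hnil : ∀ x : S, x ≠ w → x * x ≠ w) :
    CaseTwoElem S ∨ (Finite S ∧ FieldOps S) ∨ (Infinite S ∧ SimpleRingNoZeroDiv S) ∨
      CaseIdem w ∨ CaseInfChar2 w := by
  rcases add_eq_self_or_add_eq_of_congSimple hs hw with hz | ha
  · have := classification_of_add_neutral hs hw hnil hz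
    tauto
  · have := classification_of_add_absorbing hs hw hnil ha
    tauto

/-- Let `S` be a congruence-simple semiring with a
multiplicatively absorbing element `w` such that `x² ≠ w` for every
`x ∈ T = S∖{w}`.  Then exactly one of the following five cases holds:
(1) `S ≅ 𝕋₄` or `S ≅ 𝕋₈`; (2) `S` is a finite field; (3) `S` is an infinite
simple ring without zero-divisors; (4) `w = o_S`, `S` is additively idempotent
and `T·T ⊆ T`; (5) `w = o_S`, `S` is infinite, `S + S = S`, `2x = o_S` for all
`x`, `T·T ⊆ T` and all powers of any `y ∈ T` are pairwise distinct. -/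
theorem stmt_18 {S : Type*} [PaperSemiring S] (hs : CongSimple S) (w : S)
    (hw : MulAbsorbing w) (hnil : ∀ x : S, x ≠ w → x * x ≠ w) :
    (CaseTwoElem S ∧ ¬(Finite S ∧ FieldOps S) ∧
        ¬(Infinite S ∧ SimpleRingNoZeroDiv S) ∧ ¬CaseIdem w ∧ ¬CaseInfChar2 w) ∨
      (¬CaseTwoElem S ∧ (Finite S ∧ FieldOps S) ∧
        ¬(Infinite S ∧ SimpleRingNoZeroDiv S) ∧ ¬CaseIdem w ∧ ¬CaseInfChar2 w) ∨
      (¬CaseTwoElem S ∧ ¬(Finite S ∧ FieldOps S) ∧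
        (Infinite S ∧ SimpleRingNoZeroDiv S) ∧ ¬CaseIdem w ∧ ¬CaseInfChar2 w) ∨
      (¬CaseTwoElem S ∧ ¬(Finite S ∧ FieldOps S) ∧
        ¬(Infinite S ∧ SimpleRingNoZeroDiv S) ∧ CaseIdem w ∧ ¬CaseInfChar2 w) ∨
      (¬CaseTwoElem S ∧ ¬(Finite S ∧ FieldOps S) ∧
        ¬(Infinite S ∧ SimpleRingNoZeroDiv S) ∧ ¬CaseIdem w ∧ CaseInfChar2 w) := by
  have := hs.nontrivial
  obtain ⟨t, ht⟩ := exists_ne w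
  have hne : ∀ z : S, ¬∀ x : S, x = z := fun z h => ht ((h t).trans (h w).symm)
  refine exactly_one_of_five (classification hs hw hnil)
    (fun ⟨h₁, _, h₂⟩ => h₁.not_fieldOps h₂)
    (fun ⟨h₁, h₃, _⟩ => not_finite_iff_infinite.2 h₃ h₁.finite)
    (fun ⟨h₁, h₄⟩ => h₁.not_caseIdem w h₄)
    (fun ⟨h₁, _, h₅, _⟩ => not_finite_iff_infinite.2 h₅ h₁.finite)
    (fun ⟨⟨h₂, _⟩, h₃, _⟩ => not_finite_iff_infinite.2 h₃ h₂)
    (fun ⟨⟨_, z, e, hze, hz, hinv, _⟩, _, hidem, _⟩ =>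
      hze (eq_of_add_self_of_add_neg hidem hz hinv e).symm)
    (fun ⟨⟨h₂, _⟩, _, h₅, _⟩ => not_finite_iff_infinite.2 h₅ h₂)
    (fun ⟨⟨_, z, hz, hinv, _⟩, ⟨_, ha⟩, _⟩ => hne z (eq_of_add_absorbing_of_add_neg ha hz hinv))
    (fun ⟨⟨_, z, hz, hinv, _⟩, ⟨_, ha⟩, _⟩ => hne z (eq_of_add_absorbing_of_add_neg ha hz hinv))
    (fun ⟨⟨_, hidem, _⟩, _, _, _, hchar2, _⟩ => ht ((hidem t).symm.trans (hchar2 t)))
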